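/- Let s ∈ (0,1), let N be a positive integer with N > 2s, and let u ∈ L^{2*_s}(ℝ^N) with 2*_s = 2N/(N−2s). Then for every x₀ ∈ ℝ^N, lim_{δ→0⁺} δ^N ∫_{ℝ^N∖B_δ(x₀)} |u(x)|²/|x−x₀|^{N+2s} dx = 0. -/

import Mathlib

open MeasureTheory Filter Topology Metric ENNReal NNReal

noncomputable section

abbrev EN (N : ℕ) := EuclideanSpace ℝ (Fin N)

/-- The fractional critical Sobolev exponent `2*_s = 2N/(N-2s)`. -/
def pstar (N : ℕ) (s : ℝ) : ℝ := 2 * N / ((N : ℝ) - 2 * s)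

/-- The squared Gagliardo seminorm `[u]_s²`, as an extended nonnegative real. -/
def gagSq (N : ℕ) (s : ℝ) (u : EN N → ℝ) : ℝ≥0∞ :=
  ∫⁻ p : EN N × EN N, ENNReal.ofReal ((u p.1 - u p.2) ^ 2 / ‖p.1 - p.2‖ ^ ((N : ℝ) + 2 * s))

/-- The Gagliardo seminorm `[u]_s`. -/
def gagSemi (N : ℕ) (s : ℝ) (u : EN N → ℝ) : ℝ := Real.sqrt (gagSq N s u).toReal

/-- Membership in `D^{s,2}(ℝ^N)`: `u ∈ L^{2*_s}` with finite Gagliardo seminorm. -/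
def memD (N : ℕ) (s : ℝ) (u : EN N → ℝ) : Prop :=
  MemLp u (ENNReal.ofReal (pstar N s)) volume ∧ gagSq N s u < ⊤

/-- The Gagliardo bilinear form. -/
def gagForm (N : ℕ) (s : ℝ) (u v : EN N → ℝ) : ℝ :=
  ∫ p : EN N × EN N, (u p.1 - u p.2) * (v p.1 - v p.2) / ‖p.1 - p.2‖ ^ ((N : ℝ) + 2 * s)

/-- Hypothesis (h0): `h ∈ L¹(ℝ^N) ∩ L^∞(ℝ^N)`. -/
def H0 (N : ℕ) (h : EN N → ℝ) : Prop :=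
  Integrable h volume ∧ MemLp h ⊤ volume

/-- Hypothesis (h1): there is an open ball on which `h` has a positive lower bound. -/
def H1 (N : ℕ) (h : EN N → ℝ) : Prop :=
  ∃ (x₀ : EN N) (ρ : ℝ), 0 < ρ ∧ ∃ c : ℝ, 0 < c ∧ ∀ x ∈ ball x₀ ρ, c ≤ h x

/-- Weak solution of `(-Δ)^s u = ε h u^q + u^{2*_s - 1}`: a nonnegative element of
`D^{s,2}` satisfying the weak formulation against every test function in `D^{s,2}`. -/
def IsWeakSolution (N : ℕ) (s q ε : ℝ) (h u : EN N → ℝ) : Prop :=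
  memD N s u ∧ ((0 : EN N → ℝ) ≤ᵐ[volume] u) ∧
  ∀ v : EN N → ℝ, memD N s v →
    gagForm N s u v =
      ε * ∫ x, h x * u x ^ q * v x + ∫ x, u x ^ (pstar N s - 1) * v x

/-- The functional `f_ε`. -/
def fval (N : ℕ) (s q ε : ℝ) (h : EN N → ℝ) (u : EN N → ℝ) : ℝ :=
  (1 / 2) * (gagSq N s u).toReal
    - (ε / (q + 1)) * ∫ x, h x * (max (u x) 0) ^ (q + 1)
    - (1 / pstar N s) * ∫ x, (max (u x) 0) ^ (pstar N s)

/-- The derivative pairing `⟨f'_ε(u), v⟩`. -/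
def fprime (N : ℕ) (s q ε : ℝ) (h u v : EN N → ℝ) : ℝ :=
  gagForm N s u v - ε * (∫ x, h x * (max (u x) 0) ^ q * v x)
    - ∫ x, (max (u x) 0) ^ (pstar N s - 1) * v x

/-- The fractional Sobolev constant `S`. -/
def Sconst (N : ℕ) (s : ℝ) : ℝ :=
  sInf ((fun u : EN N → ℝ =>
      (gagSq N s u).toReal / (eLpNorm u (ENNReal.ofReal (pstar N s)) volume).toReal ^ 2) ''
    {u : EN N → ℝ | memD N s u ∧ ¬ u =ᵐ[volume] (0 : EN N → ℝ)})

/-- The nonlinearity `g(x,t)` of the translated functional. -/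
def gfun (N : ℕ) (s q ε : ℝ) (h uε : EN N → ℝ) (x : EN N) (t : ℝ) : ℝ :=
  ε * h x * ((uε x + max t 0) ^ q - uε x ^ q)
    + ((uε x + max t 0) ^ (pstar N s - 1) - uε x ^ (pstar N s - 1))

/-- The translated functional `I_ε`, with `G(x,v) = ∫_0^v g(x,t) dt`. -/
def Ival (N : ℕ) (s q ε : ℝ) (h uε : EN N → ℝ) (v : EN N → ℝ) : ℝ :=
  (1 / 2) * (gagSq N s v).toReal - ∫ x, ∫ t in (0:ℝ)..(v x), gfun N s q ε h uε x t

/-- The derivative pairing `⟨I'_ε(v), w⟩`. -/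
def Iprime (N : ℕ) (s q ε : ℝ) (h uε : EN N → ℝ) (v w : EN N → ℝ) : ℝ :=
  gagForm N s v w - ∫ x, gfun N s q ε h uε x (v x) * w x

/-- `G*(x,t) = (1/2*_s)((u_ε + t_+)^{2*_s} - u_ε^{2*_s}) - u_ε^{2*_s-1} t_+`. -/
def Gstar (N : ℕ) (s : ℝ) (uε : EN N → ℝ) (x : EN N) (t : ℝ) : ℝ :=
  (1 / pstar N s) * ((uε x + max t 0) ^ (pstar N s) - uε x ^ (pstar N s))
    - uε x ^ (pstar N s - 1) * max t 0

/-- The auxiliary functional `I*_ε`. -/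
def Istar (N : ℕ) (s : ℝ) (uε : EN N → ℝ) (v : EN N → ℝ) : ℝ :=
  (1 / 2) * (gagSq N s v).toReal - ∫ x, Gstar N s uε x (v x)

/-- `|D^s ψ(x)|² = ∫ |ψ(x+h) - ψ(x)|²/|h|^{N+2s} dh`. -/
def DsqE (N : ℕ) (s : ℝ) (ψ : EN N → ℝ) (x : EN N) : ℝ≥0∞ :=
  ∫⁻ h : EN N, ENNReal.ofReal ((ψ (x + h) - ψ x) ^ 2 / ‖h‖ ^ ((N : ℝ) + 2 * s))

/-- The standard bubble `z(x) = κ (1+|x|²)^{-(N-2s)/2}`. -/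
def zbub (N : ℕ) (s κ : ℝ) (x : EN N) : ℝ := κ * (1 + ‖x‖ ^ 2) ^ (-((N : ℝ) - 2 * s) / 2)

/-- The rescaled bubble `z_{μ,ξ}(x) = μ^{-(N-2s)/2} z((x-ξ)/μ)`. -/
def zmu (N : ℕ) (s κ μ : ℝ) (ξ : EN N) (x : EN N) : ℝ :=
  μ ^ (-((N : ℝ) - 2 * s) / 2) * zbub N s κ (μ⁻¹ • (x - ξ))

/-!
Take the conjugate exponents `p = N/(N-2s)` and `q = N/(2s)`, so that `u² ∈ Lᵖ`. By scaling,
`∫_{|x-x₀| ≥ δ} |x-x₀|^{-(N+2s)q} = C δ^{-Nq}`, so Hölder's inequality bounds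
`δ^N ∫_A u²/|x-x₀|^{N+2s}` by `C^{1/q} ‖u²‖_{Lᵖ(A)}` for every `A ⊆ ℝ^N ∖ B_δ(x₀)`, uniformly
in `δ`. Split at a radius `η ≥ δ`: on `B_η(x₀)` the bound is small once `η` is, by absolute
continuity of `∫ |u|^{2*_s}`, and outside `B_η(x₀)` it gains the factor `(δ/η)^N`.
-/

open Set Module

section AddHaar

variable {E : Type*} [NormedAddCommGroup E] [NormedSpace ℝ E] [FiniteDimensional ℝ E]
  [MeasurableSpace E] [BorelSpace E] (μ : Measure E) [μ.IsAddHaarMeasure]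

theorem setLIntegral_compl_ball_enorm_sub_rpow (x₀ : E) (r γ : ℝ) :
    ∫⁻ x in (ball x₀ r)ᶜ, ‖x - x₀‖ₑ ^ γ ∂μ = ∫⁻ x in (ball 0 r)ᶜ, ‖x‖ₑ ^ γ ∂μ := by
  conv_rhs => rw [← map_sub_right_eq_self μ x₀]
  rw [setLIntegral_map measurableSet_ball.compl (by fun_prop) (measurable_sub_const x₀)]
  congr 2
  ext x
  simp [dist_eq_norm]

theorem setLIntegral_compl_ball_zero_enorm_rpow_neg (β : ℝ) {r : ℝ} (hr : 0 < r) :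
    ∫⁻ x in (ball 0 r)ᶜ, ‖x‖ₑ ^ (-β) ∂μ =
      ENNReal.ofReal r ^ ((finrank ℝ E : ℝ) - β) * ∫⁻ x in (ball 0 1)ᶜ, ‖x‖ₑ ^ (-β) ∂μ := by
  have hr0 : ENNReal.ofReal r ≠ 0 := by simpa using hr
  have hpre : (r • ·) ⁻¹' (ball (0 : E) r)ᶜ = (ball 0 1)ᶜ := by
    ext x
    simp [norm_smul, abs_of_pos hr, hr]
  have hdil : ENNReal.ofReal r ^ (-(finrank ℝ E : ℝ)) * ∫⁻ x in (ball 0 r)ᶜ, ‖x‖ₑ ^ (-β) ∂μ =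
      ENNReal.ofReal r ^ (-β) * ∫⁻ x in (ball 0 1)ᶜ, ‖x‖ₑ ^ (-β) ∂μ := by
    calc _ = ∫⁻ x in (ball 0 r)ᶜ, ‖x‖ₑ ^ (-β) ∂(Measure.map (r • ·) μ) := by
          rw [Measure.map_addHaar_smul μ hr.ne', Measure.restrict_smul, lintegral_smul_measure,
            smul_eq_mul, abs_of_pos (by positivity), ENNReal.rpow_neg, ENNReal.rpow_natCast,
            ENNReal.ofReal_inv_of_pos (by positivity), ENNReal.ofReal_pow hr.le]
      _ = ∫⁻ y in (ball 0 1)ᶜ, ‖r • y‖ₑ ^ (-β) ∂μ := by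
          rw [setLIntegral_map measurableSet_ball.compl (by fun_prop) (measurable_const_smul r),
            hpre]
      _ = _ := by
          simp_rw [enorm_smul, Real.enorm_eq_ofReal hr.le,
            ENNReal.mul_rpow_of_ne_top ofReal_ne_top enorm_ne_top]
          exact lintegral_const_mul _ (by fun_prop)
  calc _ = ENNReal.ofReal r ^ (finrank ℝ E : ℝ) *
        (ENNReal.ofReal r ^ (-(finrank ℝ E : ℝ)) * ∫⁻ x in (ball 0 r)ᶜ, ‖x‖ₑ ^ (-β) ∂μ) := by
        rw [← mul_assoc, ← ENNReal.rpow_add _ _ hr0 ofReal_ne_top, add_neg_cancel,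
          ENNReal.rpow_zero, one_mul]
    _ = _ := by
        rw [hdil, ← mul_assoc, ← ENNReal.rpow_add _ _ hr0 ofReal_ne_top, sub_eq_add_neg]

theorem setLIntegral_compl_unitBall_enorm_rpow_neg_lt_top {β : ℝ} (hβ : (finrank ℝ E : ℝ) < β) :
    ∫⁻ x in (ball (0 : E) 1)ᶜ, ‖x‖ₑ ^ (-β) ∂μ < ∞ := by
  have hbound : ∀ x ∈ (ball (0 : E) 1)ᶜ,
      ‖x‖ₑ ^ (-β) ≤ ENNReal.ofReal (2 ^ β) * ENNReal.ofReal ((1 + ‖x‖) ^ (-β)) := by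
    intro x hx
    have hx1 : 1 ≤ ‖x‖ := by simpa using hx
    have hreal : ‖x‖ ^ (-β) ≤ 2 ^ β * (1 + ‖x‖) ^ (-β) :=
      calc ‖x‖ ^ (-β) ≤ ((1 + ‖x‖) / 2) ^ (-β) :=
            Real.rpow_le_rpow_of_nonpos (by positivity) (by linarith) (by linarith)
        _ = 2 ^ β * (1 + ‖x‖) ^ (-β) := by
            rw [Real.div_rpow (by positivity) zero_le_two, Real.rpow_neg zero_le_two,
              div_inv_eq_mul, mul_comm]
    rw [← ENNReal.ofReal_mul (by positivity), ← ofReal_norm,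
      ENNReal.ofReal_rpow_of_pos (by linarith)]
    exact ENNReal.ofReal_le_ofReal hreal
  calc _ ≤ ∫⁻ x in (ball (0 : E) 1)ᶜ,
          ENNReal.ofReal (2 ^ β) * ENNReal.ofReal ((1 + ‖x‖) ^ (-β)) ∂μ :=
        setLIntegral_mono (by fun_prop) hbound
    _ ≤ ENNReal.ofReal (2 ^ β) * ∫⁻ x, ENNReal.ofReal ((1 + ‖x‖) ^ (-β)) ∂μ := by
        rw [← lintegral_const_mul _ (by fun_prop)]
        exact setLIntegral_le_lintegral _ _
    _ < ∞ := ENNReal.mul_lt_top ofReal_lt_top (finite_integral_one_add_norm hβ)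

theorem setLIntegral_compl_ball_enorm_sub_rpow_neg (x₀ : E) (β : ℝ) {r : ℝ} (hr : 0 < r) :
    ∫⁻ x in (ball x₀ r)ᶜ, ‖x - x₀‖ₑ ^ (-β) ∂μ =
      ENNReal.ofReal r ^ ((finrank ℝ E : ℝ) - β) * ∫⁻ x in (ball 0 1)ᶜ, ‖x‖ₑ ^ (-β) ∂μ := by
  rw [setLIntegral_compl_ball_enorm_sub_rpow, setLIntegral_compl_ball_zero_enorm_rpow_neg μ β hr]

-- The weight exponent `n + n / q` is the one for which this bound is invariant under dilations.
theorem ofReal_rpow_mul_setLIntegral_le {p q : ℝ} (hpq : p.HolderConjugate q) {f : E → ℝ≥0∞}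
    (hf : AEMeasurable f μ) (x₀ : E) {δ : ℝ} (hδ : 0 < δ) {A : Set E} (hA : A ⊆ (ball x₀ δ)ᶜ) :
    ENNReal.ofReal δ ^ (finrank ℝ E : ℝ) *
        ∫⁻ x in A, f x * ‖x - x₀‖ₑ ^ (-((finrank ℝ E : ℝ) + finrank ℝ E / q)) ∂μ ≤
      (∫⁻ x in A, f x ^ p ∂μ) ^ (1 / p) *
        (∫⁻ x in (ball 0 1)ᶜ, ‖x‖ₑ ^ (-((finrank ℝ E : ℝ) * q + finrank ℝ E)) ∂μ) ^ (1 / q) := by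
  set n : ℝ := (finrank ℝ E : ℝ)
  set C := ∫⁻ x in (ball (0 : E) 1)ᶜ, ‖x‖ₑ ^ (-(n * q + n)) ∂μ
  have hq : q ≠ 0 := hpq.symm.ne_zero
  have hq1 : 0 ≤ 1 / q := by simpa using hpq.symm.nonneg
  have hδ0 : ENNReal.ofReal δ ≠ 0 := by simpa using hδ
  have hcancel : ENNReal.ofReal δ ^ n * ENNReal.ofReal δ ^ ((n - (n * q + n)) * (1 / q)) = 1 := by
    rw [← ENNReal.rpow_add _ _ hδ0 ofReal_ne_top, show n + (n - (n * q + n)) * (1 / q) = 0 by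
      field_simp; ring, ENNReal.rpow_zero]
  have hweight : ∫⁻ x in A, (‖x - x₀‖ₑ ^ (-(n + n / q))) ^ q ∂μ ≤
      ENNReal.ofReal δ ^ (n - (n * q + n)) * C := by
    simp_rw [← ENNReal.rpow_mul]
    rw [show -(n + n / q) * q = -(n * q + n) by field_simp,
      ← setLIntegral_compl_ball_enorm_sub_rpow_neg μ x₀ _ hδ]
    exact lintegral_mono_set hA
  calc _ ≤ ENNReal.ofReal δ ^ n * ((∫⁻ x in A, f x ^ p ∂μ) ^ (1 / p) *
          (ENNReal.ofReal δ ^ (n - (n * q + n)) * C) ^ (1 / q)) := by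
        gcongr
        exact (ENNReal.lintegral_mul_le_Lp_mul_Lq _ hpq hf.restrict (by fun_prop)).trans
          (by gcongr)
    _ = (∫⁻ x in A, f x ^ p ∂μ) ^ (1 / p) * C ^ (1 / q) *
          (ENNReal.ofReal δ ^ n * ENNReal.ofReal δ ^ ((n - (n * q + n)) * (1 / q))) := by
        rw [ENNReal.mul_rpow_of_nonneg _ _ hq1, ← ENNReal.rpow_mul]
        ring
    _ = _ := by rw [hcancel, mul_one]

theorem ofReal_rpow_mul_setLIntegral_compl_ball_le {p q : ℝ} (hpq : p.HolderConjugate q)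
    {f : E → ℝ≥0∞} (hf : AEMeasurable f μ) (x₀ : E) {δ η : ℝ} (hδ : 0 < δ) (hδη : δ ≤ η) :
    ENNReal.ofReal δ ^ (finrank ℝ E : ℝ) *
        ∫⁻ x in (ball x₀ δ)ᶜ, f x * ‖x - x₀‖ₑ ^ (-((finrank ℝ E : ℝ) + finrank ℝ E / q)) ∂μ ≤
      ((∫⁻ x in ball x₀ η, f x ^ p ∂μ) ^ (1 / p) +
          ENNReal.ofReal (δ / η) ^ (finrank ℝ E : ℝ) * (∫⁻ x, f x ^ p ∂μ) ^ (1 / p)) *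
        (∫⁻ x in (ball 0 1)ᶜ, ‖x‖ₑ ^ (-((finrank ℝ E : ℝ) * q + finrank ℝ E)) ∂μ) ^ (1 / q) := by
  set n : ℝ := (finrank ℝ E : ℝ)
  set F := fun x => f x * ‖x - x₀‖ₑ ^ (-(n + n / q))
  set D := (∫⁻ x in (ball (0 : E) 1)ᶜ, ‖x‖ₑ ^ (-(n * q + n)) ∂μ) ^ (1 / q)
  have hη : 0 < η := hδ.trans_le hδη
  have hp1 : 0 ≤ 1 / p := by simpa using hpq.nonneg
  have hsplit : ∫⁻ x in (ball x₀ δ)ᶜ, F x ∂μ ≤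
      ∫⁻ x in (ball x₀ δ)ᶜ ∩ ball x₀ η, F x ∂μ + ∫⁻ x in (ball x₀ η)ᶜ, F x ∂μ :=
    (lintegral_mono_set fun x hx => (em (x ∈ ball x₀ η)).imp (fun h => ⟨hx, h⟩) id).trans
      (lintegral_union_le _ _ _)
  have hnear : ENNReal.ofReal δ ^ n * ∫⁻ x in (ball x₀ δ)ᶜ ∩ ball x₀ η, F x ∂μ ≤
      (∫⁻ x in ball x₀ η, f x ^ p ∂μ) ^ (1 / p) * D :=
    (ofReal_rpow_mul_setLIntegral_le μ hpq hf x₀ hδ inter_subset_left).trans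
      (by gcongr; exact inter_subset_right)
  have hfar : ENNReal.ofReal δ ^ n * ∫⁻ x in (ball x₀ η)ᶜ, F x ∂μ ≤
      ENNReal.ofReal (δ / η) ^ n * ((∫⁻ x, f x ^ p ∂μ) ^ (1 / p) * D) := by
    rw [show δ = δ / η * η by field_simp, ENNReal.ofReal_mul (by positivity),
      ENNReal.mul_rpow_of_nonneg _ _ (by positivity), mul_assoc, mul_div_cancel_right₀ _ hη.ne']
    refine mul_le_mul_right ((ofReal_rpow_mul_setLIntegral_le μ hpq hf x₀ hη subset_rfl).trans ?_) _
    gcongr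
    exact Measure.restrict_le_self
  calc _ ≤ ENNReal.ofReal δ ^ n * ∫⁻ x in (ball x₀ δ)ᶜ ∩ ball x₀ η, F x ∂μ +
        ENNReal.ofReal δ ^ n * ∫⁻ x in (ball x₀ η)ᶜ, F x ∂μ := by
        rw [← mul_add]
        gcongr
    _ ≤ _ := by
        rw [add_mul, mul_assoc]
        exact add_le_add hnear hfar

theorem tendsto_ofReal_rpow_mul_setLIntegral_compl_ball [Nontrivial E] {p q : ℝ}
    (hpq : p.HolderConjugate q) {f : E → ℝ≥0∞} (hf : AEMeasurable f μ)
    (hfp : ∫⁻ x, f x ^ p ∂μ ≠ ∞) (x₀ : E) :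
    Tendsto (fun δ : ℝ => ENNReal.ofReal δ ^ (finrank ℝ E : ℝ) *
        ∫⁻ x in (ball x₀ δ)ᶜ, f x * ‖x - x₀‖ₑ ^ (-((finrank ℝ E : ℝ) + finrank ℝ E / q)) ∂μ)
      (𝓝[>] 0) (𝓝 0) := by
  set n : ℝ := (finrank ℝ E : ℝ)
  set D := (∫⁻ x in (ball (0 : E) 1)ᶜ, ‖x‖ₑ ^ (-(n * q + n)) ∂μ) ^ (1 / q)
  have hn : 0 < n := Nat.cast_pos.2 finrank_pos
  have hD : D ≠ ∞ := by
    refine ENNReal.rpow_ne_top_of_nonneg (by simpa using hpq.symm.nonneg) ?_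
    refine (setLIntegral_compl_unitBall_enorm_rpow_neg_lt_top μ ?_).ne
    show n < n * q + n
    nlinarith [hpq.symm.pos]
  have hball : Tendsto (fun η => μ (ball x₀ η)) (𝓝[>] 0) (𝓝 0) := by
    have hpow : Tendsto (fun η : ℝ => η ^ finrank ℝ E) (𝓝 0) (𝓝 0) := by
      simpa [finrank_pos.ne'] using (continuous_pow (finrank ℝ E)).tendsto (0 : ℝ)
    have := ENNReal.Tendsto.mul_const (ENNReal.tendsto_ofReal hpow)
      (Or.inr (measure_ball_lt_top (μ := μ) (x := 0) (r := 1)).ne)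
    rw [ENNReal.ofReal_zero, zero_mul] at this
    exact (this.mono_left nhdsWithin_le_nhds).congr'
      (eventually_nhdsWithin_of_forall fun η hη => (Measure.addHaar_ball μ x₀ (le_of_lt hη)).symm)
  have hnear : Tendsto (fun η => (∫⁻ x in ball x₀ η, f x ^ p ∂μ) ^ (1 / p) * D) (𝓝[>] 0) (𝓝 0) := by
    have := ((ENNReal.continuous_rpow_const (y := 1 / p)).tendsto 0).comp
      (tendsto_setLIntegral_zero hfp hball)
    simpa [ENNReal.zero_rpow_of_pos, hpq.pos] using ENNReal.Tendsto.mul_const this (Or.inr hD)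
  rw [ENNReal.tendsto_nhds_zero]
  intro ε hε
  obtain ⟨η, hηε, hη⟩ := ((ENNReal.tendsto_nhds_zero.1 hnear (ε / 2) (ENNReal.half_pos hε.ne')).and
    self_mem_nhdsWithin).exists
  have hfar : Tendsto (fun δ => ENNReal.ofReal (δ / η) ^ n * (∫⁻ x, f x ^ p ∂μ) ^ (1 / p) * D)
      (𝓝[>] 0) (𝓝 0) := by
    have hlin : Tendsto (fun δ : ℝ => ENNReal.ofReal (δ / η)) (𝓝[>] 0) (𝓝 0) := by
      have : Tendsto (fun δ : ℝ => δ / η) (𝓝 0) (𝓝 0) := by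
        simpa using (continuous_id.div_const η).tendsto 0
      simpa using ENNReal.tendsto_ofReal (this.mono_left nhdsWithin_le_nhds)
    have := ((ENNReal.continuous_rpow_const (y := n)).tendsto 0).comp hlin
    rw [ENNReal.zero_rpow_of_pos hn] at this
    simpa using ENNReal.Tendsto.mul_const (ENNReal.Tendsto.mul_const this
      (Or.inr (ENNReal.rpow_ne_top_of_nonneg (by simpa using hpq.nonneg) hfp))) (Or.inr hD)
  filter_upwards [ENNReal.tendsto_nhds_zero.1 hfar (ε / 2) (ENNReal.half_pos hε.ne'),
    Ioc_mem_nhdsGT hη] with δ hδε ⟨hδ, hδη⟩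
  calc _ ≤ _ := ofReal_rpow_mul_setLIntegral_compl_ball_le μ hpq hf x₀ hδ hδη
    _ ≤ ε / 2 + ε / 2 := by
        rw [add_mul]
        exact add_le_add hηε hδε
    _ = ε := ENNReal.add_halves ε

end AddHaar

theorem integral_sq_div_norm_sub_rpow_eq_toReal_lintegral {E : Type*} [NormedAddCommGroup E]
    [MeasurableSpace E] [BorelSpace E] {μ : Measure E} {u : E → ℝ} (hu : AEMeasurable u μ)
    (x₀ : E) (α : ℝ) {δ : ℝ} (hδ : 0 < δ) :
    ∫ x in (ball x₀ δ)ᶜ, u x ^ 2 / ‖x - x₀‖ ^ α ∂μ =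
      (∫⁻ x in (ball x₀ δ)ᶜ, ‖u x‖ₑ ^ (2 : ℝ) * ‖x - x₀‖ₑ ^ (-α) ∂μ).toReal := by
  have hnorm : Measurable fun x => ‖x - x₀‖ ^ α := by fun_prop
  have hmeas : AEStronglyMeasurable (fun x => u x ^ 2 / ‖x - x₀‖ ^ α) μ :=
    ((hu.pow_const 2).div hnorm.aemeasurable).aestronglyMeasurable
  refine (integral_eq_lintegral_of_nonneg_ae (ae_of_all _ fun x => by positivity)
    hmeas.restrict).trans ?_
  congr 1
  refine setLIntegral_congr_fun measurableSet_ball.compl fun x hx => ?_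
  have hx : 0 < ‖x - x₀‖ := by
    simpa [dist_eq_norm] using hδ.trans_le (not_lt.1 hx)
  rw [ENNReal.ofReal_div_of_pos (by positivity), div_eq_mul_inv, ← ofReal_norm (x - x₀),
    ENNReal.ofReal_rpow_of_pos hx, ← ENNReal.ofReal_inv_of_pos (by positivity),
    ← Real.rpow_neg hx.le, ENNReal.rpow_ofNat, ← ofReal_norm, ← ENNReal.ofReal_pow (norm_nonneg _),
    Real.norm_eq_abs, sq_abs]

theorem Real.holderConjugate_div_sub_div {a b : ℝ} (ha : 0 < a) (hab : a < b) :
    (b / (b - a)).HolderConjugate (b / a) := by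
  have hb : b ≠ 0 := by linarith
  rw [Real.holderConjugate_iff]
  refine ⟨by rw [lt_div_iff₀ (by linarith)]; linarith, ?_⟩
  field_simp
  ring

theorem statement4_general (N : ℕ) (s : ℝ) (hs : s ∈ Set.Ioo (0 : ℝ) 1)
    (hNs : 2 * s < (N : ℝ)) (u : EN N → ℝ)
    (hu : MemLp u (ENNReal.ofReal (pstar N s)) volume) (x₀ : EN N) :
    Tendsto (fun δ : ℝ =>
        δ ^ (N : ℝ) * ∫ x in (ball x₀ δ)ᶜ, (u x) ^ 2 / ‖x - x₀‖ ^ ((N : ℝ) + 2 * s))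
      (𝓝[>] 0) (𝓝 0) := by
  have hs0 : 0 < s := hs.1
  have hN : (0 : ℝ) < N := by linarith
  have : Nontrivial (EN N) := Module.nontrivial_of_finrank_pos (R := ℝ)
    (by rw [finrank_euclideanSpace_fin]; exact_mod_cast hN)
  have hpq := Real.holderConjugate_div_sub_div (by linarith : 0 < 2 * s) hNs
  have hup : ∫⁻ x, (‖u x‖ₑ ^ (2 : ℝ)) ^ (N / (N - 2 * s) : ℝ) ≠ ∞ := by
    have hp : 0 < pstar N s := by unfold pstar; exact div_pos (by linarith) (by linarith)
    have := lintegral_rpow_enorm_lt_top_of_eLpNorm_lt_top (by simpa using hp) ofReal_ne_top hu.2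
    simp_rw [← ENNReal.rpow_mul]
    rw [ENNReal.toReal_ofReal hp.le, pstar, mul_div_assoc] at this
    exact this.ne
  have key := tendsto_ofReal_rpow_mul_setLIntegral_compl_ball volume hpq
    (hu.1.aemeasurable.enorm.pow_const 2) hup x₀
  rw [finrank_euclideanSpace_fin, show (N : ℝ) + N / (N / (2 * s)) = N + 2 * s by
    field_simp] at key
  refine ((ENNReal.tendsto_toReal zero_ne_top).comp key).congr' ?_
  filter_upwards [self_mem_nhdsWithin] with δ hδ
  rw [Function.comp_apply, ENNReal.toReal_mul, ← ENNReal.toReal_rpow, ENNReal.toReal_ofReal hδ.le,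
    integral_sq_div_norm_sub_rpow_eq_toReal_lintegral hu.1.aemeasurable x₀ _ hδ]

/-- `δ^N ∫_{ℝ^N ∖ B_δ(x₀)} |u|²/|x-x₀|^{N+2s} → 0` as `δ → 0⁺`. -/
theorem statement4 (N : ℕ) (hN0 : 0 < N) (s : ℝ) (hs : s ∈ Set.Ioo (0 : ℝ) 1)
    (hNs : 2 * s < (N : ℝ)) (u : EN N → ℝ)
    (hu : MemLp u (ENNReal.ofReal (pstar N s)) volume) (x₀ : EN N) :
    Tendsto (fun δ : ℝ =>
        δ ^ (N : ℝ) * ∫ x in (ball x₀ δ)ᶜ, (u x) ^ 2 / ‖x - x₀‖ ^ ((N : ℝ) + 2 * s))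
      (𝓝[>] 0) (𝓝 0) :=
  statement4_general N s hs hNs u hu x₀
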